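/- Let η ∈ ℝ, η ≠ 0, and let z, ρ : ℝ² → ℝ be smooth (C^∞) functions of (x,t) satisfying the sine-Gordon equation z_xt = sin z together with the Riccati system ρ_x = −(1/2) z_x ρ² + η ρ − (1/2) z_x and ρ_t = (1/(2η)) (sin z)(1 − ρ²) + (1/η)(cos z) ρ. Then z' := z + 4 arctan ρ satisfies the sine-Gordon equation z'_xt = sin z'. -/

import Mathlib

/-- Partial derivative in the first variable `x`. -/
noncomputable def px (f : ℝ → ℝ → ℝ) : ℝ → ℝ → ℝ := fun x t => deriv (fun y => f y t) x

/-- Partial derivative in the second variable `t`. -/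
noncomputable def pt (f : ℝ → ℝ → ℝ) : ℝ → ℝ → ℝ := fun x t => deriv (fun s => f x s) t

/-!
Put `θ = 2 arctan ρ`, so that `z' = z + 2θ`, `sin θ = 2ρ/(1+ρ²)` and `cos θ = (1-ρ²)/(1+ρ²)`.
In terms of `θ` the Riccati system reads `θ_x = -z_x + η sin θ` and `θ_t = sin (z + θ) / η`,
hence `z'_x = -z_x + 2η sin θ` (the classical Bäcklund relation `(z + z')_x = 2η sin ((z' - z)/2)`)
and `z'_xt = -sin z + 2 cos θ sin (z + θ) = sin (z + 2θ)`.
-/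

open Real Function

section PartialDerivatives

variable {f : ℝ → ℝ → ℝ}

theorem hasDerivAt_px (hf : Differentiable ℝ (uncurry f)) (x t : ℝ) :
    HasDerivAt (fun y => f y t) (px f x t) x :=
  have h : DifferentiableAt ℝ (fun y => f y t) x :=
    (hf (x, t)).comp (f := fun y => (y, t)) x (differentiableAt_id.prodMk (differentiableAt_const t))
  h.hasDerivAt

theorem hasDerivAt_pt (hf : Differentiable ℝ (uncurry f)) (x t : ℝ) :
    HasDerivAt (f x) (pt f x t) t :=
  have h : DifferentiableAt ℝ (f x) t :=
    (hf (x, t)).comp t ((differentiableAt_const x).prodMk differentiableAt_id)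
  h.hasDerivAt

theorem uncurry_px_eq_fderiv (hf : Differentiable ℝ (uncurry f)) :
    uncurry (px f) = fun p => fderiv ℝ (uncurry f) p (1, 0) := by
  funext ⟨x, t⟩
  have hline : HasDerivAt (fun y : ℝ => (y, t)) ((1 : ℝ), (0 : ℝ)) x :=
    (hasDerivAt_id x).prodMk (hasDerivAt_const x t)
  exact ((hf (x, t)).hasFDerivAt.comp_hasDerivAt x hline).deriv

theorem contDiff_px {n : WithTop ℕ∞} (hf : ContDiff ℝ (n + 1) (uncurry f)) :
    ContDiff ℝ n (uncurry (px f)) := by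
  rw [uncurry_px_eq_fderiv (hf.differentiable (by simp))]
  exact (hf.fderiv_right le_rfl).clm_apply contDiff_const

end PartialDerivatives

section Trigonometry

theorem sin_two_mul_arctan (r : ℝ) : sin (2 * arctan r) = 2 * r / (1 + r ^ 2) := by
  rw [sin_two_mul, ← tan_mul_cos (cos_arctan_pos r).ne', tan_arctan]
  calc 2 * (r * cos (arctan r)) * cos (arctan r) = 2 * r * cos (arctan r) ^ 2 := by ring
    _ = 2 * r / (1 + r ^ 2) := by rw [cos_sq_arctan, mul_one_div]

theorem cos_two_mul_arctan (r : ℝ) : cos (2 * arctan r) = (1 - r ^ 2) / (1 + r ^ 2) := by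
  rw [cos_two_mul, cos_sq_arctan]
  field_simp
  ring

theorem HasDerivAt.two_mul_arctan {g : ℝ → ℝ} {g' a : ℝ} (hg : HasDerivAt g g' a) :
    HasDerivAt (fun s => 2 * Real.arctan (g s)) (2 * g' / (1 + g a ^ 2)) a :=
  (hg.arctan.const_mul 2).congr_deriv (by ring)

theorem sin_add_two_mul (z θ : ℝ) : sin (z + 2 * θ) = 2 * cos θ * sin (z + θ) - sin z := by
  simp only [sin_add, sin_two_mul, cos_two_mul]
  ring

theorem riccati_x_half_angle (η c r : ℝ) :
    2 * (-(1 / 2) * c * r ^ 2 + η * r - (1 / 2) * c) / (1 + r ^ 2)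
      = -c + η * sin (2 * arctan r) := by
  rw [sin_two_mul_arctan]
  field_simp
  ring

theorem riccati_t_half_angle {η : ℝ} (hη : η ≠ 0) (w r : ℝ) :
    2 * ((1 / (2 * η)) * sin w * (1 - r ^ 2) + (1 / η) * cos w * r) / (1 + r ^ 2)
      = sin (w + 2 * arctan r) / η := by
  rw [sin_add, sin_two_mul_arctan, cos_two_mul_arctan]
  field_simp

end Trigonometry

section Riccati

variable {η : ℝ} {z ρ : ℝ → ℝ → ℝ}

theorem px_add_four_mul_arctan_of_riccati (hz : Differentiable ℝ (uncurry z))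
    (hρ : Differentiable ℝ (uncurry ρ))
    (hρx : ∀ x t, px ρ x t
      = -(1 / 2) * px z x t * (ρ x t) ^ 2 + η * ρ x t - (1 / 2) * px z x t) (x t : ℝ) :
    px (fun x t => z x t + 4 * arctan (ρ x t)) x t
      = -px z x t + 2 * η * sin (2 * arctan (ρ x t)) := by
  have hθ := HasDerivAt.two_mul_arctan (hasDerivAt_px hρ x t)
  rw [hρx, riccati_x_half_angle] at hθ
  have hz' : HasDerivAt (fun y => z y t + 2 * (2 * arctan (ρ y t)))
      (px z x t + 2 * (-px z x t + η * sin (2 * arctan (ρ x t)))) x :=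
    (hasDerivAt_px hz x t).add (hθ.const_mul 2)
  have h4 : ∀ a : ℝ, 4 * a = 2 * (2 * a) := fun a => by ring
  show deriv (fun y => z y t + 4 * arctan (ρ y t)) x = _
  simp only [h4]
  rw [hz'.deriv]
  ring

theorem hasDerivAt_two_mul_arctan_of_riccati (hη : η ≠ 0) (hρ : Differentiable ℝ (uncurry ρ))
    (hρt : ∀ x t, pt ρ x t
      = (1 / (2 * η)) * sin (z x t) * (1 - (ρ x t) ^ 2) + (1 / η) * cos (z x t) * ρ x t)
    (x t : ℝ) :
    HasDerivAt (fun s => 2 * arctan (ρ x s)) (sin (z x t + 2 * arctan (ρ x t)) / η) t := by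
  have hθ := HasDerivAt.two_mul_arctan (hasDerivAt_pt hρ x t)
  rwa [hρt, riccati_t_half_angle hη] at hθ

end Riccati

/-- the auto-Bäcklund transformation `z' = z + 4 arctan ρ` of the
sine-Gordon equation `z_xt = sin z`, where `ρ` solves the associated Riccati
covering with parameter `η ≠ 0`. -/
theorem sine_gordon_auto_backlund (η : ℝ) (hη : η ≠ 0) (z ρ : ℝ → ℝ → ℝ)
    (hz : ContDiff ℝ (⊤ : ℕ∞) (Function.uncurry z))
    (hρ : ContDiff ℝ (⊤ : ℕ∞) (Function.uncurry ρ))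
    (hsg : ∀ x t, pt (px z) x t = Real.sin (z x t))
    (hρx : ∀ x t, px ρ x t
      = -(1 / 2) * px z x t * (ρ x t) ^ 2 + η * ρ x t - (1 / 2) * px z x t)
    (hρt : ∀ x t, pt ρ x t
      = (1 / (2 * η)) * Real.sin (z x t) * (1 - (ρ x t) ^ 2)
        + (1 / η) * Real.cos (z x t) * ρ x t) :
    ∀ x t,
      pt (px (fun x t => z x t + 4 * Real.arctan (ρ x t))) x t
        = Real.sin (z x t + 4 * Real.arctan (ρ x t)) := by
  intro x t
  have hzd : Differentiable ℝ (uncurry z) := hz.differentiable (by simp)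
  have hρd : Differentiable ℝ (uncurry ρ) := hρ.differentiable (by simp)
  have hzx : Differentiable ℝ (uncurry (px z)) :=
    (contDiff_px (n := 1) (hz.of_le (WithTop.coe_le_coe.mpr le_top))).differentiable one_ne_zero
  have hzxt : HasDerivAt (px z x) (sin (z x t)) t := hsg x t ▸ hasDerivAt_pt hzx x t
  have hz'xt : HasDerivAt (fun s => -px z x s + 2 * η * sin (2 * arctan (ρ x s)))
      (-sin (z x t) + 2 * η * (cos (2 * arctan (ρ x t)) * (sin (z x t + 2 * arctan (ρ x t)) / η)))
      t :=
    hzxt.neg.add ((hasDerivAt_two_mul_arctan_of_riccati hη hρd hρt x t).sin.const_mul (2 * η))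
  simp only [pt, px_add_four_mul_arctan_of_riccati hzd hρd hρx x]
  rw [hz'xt.deriv,
    show 4 * arctan (ρ x t) = 2 * (2 * arctan (ρ x t)) by ring,
    sin_add_two_mul (z x t) (2 * arctan (ρ x t))]
  field_simp
  ring
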